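/- Let X and Y be compact metric spaces and G the free semigroup action on X generated by {f_y}_{y∈Y}. If G has the gluing orbit property, then the skew product F : Y^ℕ × X → Y^ℕ × X, F(ω,x) = (σω, f_{ω_1} x), has the gluing orbit property (as a single continuous map) with respect to the metric D((ω,x),(ω',x')) = max{d'(ω,ω'), d(x,x')}, where d'(ω,ω') = Σ_{j≥1} 2^{-j} d_Y(ω_j, ω'_j). -/

import Mathlib

open Metric

variable {X Y : Type*}

/-- For a word `w = [i₁, …, i_k]`, `fw f w = f_{i₁} ∘ ⋯ ∘ f_{i_k}`. -/
def fw (f : Y → X → X) : List Y → X → X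
  | [] => id
  | y :: w => fun x => f y (fw f w x)

/-- Bowen metric of the word `w = i₁ ⋯ i_n`:
`d_w(x,y) = max_{0 ≤ j ≤ n} d(f_{i_j ⋯ i_1} x, f_{i_j ⋯ i_1} y)`, i.e. the maximum of
`d(f_{w'} x, f_{w'} y)` over the words `w' ≤ w̄` (the reverses of initial segments of `w`). -/
noncomputable def dB [PseudoMetricSpace X] (f : Y → X → X) (w : List Y) (x y : X) : ℝ :=
  ((w.inits.map fun u => dist (fw f u.reverse x) (fw f u.reverse y))).foldr max 0

/-- The `(w,ε)`-Bowen ball at `x`. -/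
def BB [PseudoMetricSpace X] (f : Y → X → X) (w : List Y) (x : X) (ε : ℝ) : Set X :=
  {z | dB f w x z < ε}

/-- The skew product `F(ω, x) = (σω, f_{ω₁}(x))` on `Y^ℕ × X`. -/
def skew (f : Y → X → X) : (ℕ → Y) × X → (ℕ → Y) × X :=
  fun p => (fun n => p.1 (n + 1), f (p.1 0) p.2)

/-- The cumulative word `w_{(n_1)} w_{(p_1)} ⋯ w_{(n_j)} w_{(p_j)}` (in orbit order):
its reverse is `\overline{w_{(p_j)}} \overline{w_{(n_j)}} ⋯ \overline{w_{(p_1)}} \overline{w_{(n_1)}}`. -/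
def Wcum (wn wp : ℕ → List Y) (j : ℕ) : List Y :=
  ((List.range j).map fun i => wn i ++ wp i).flatten

/-- The metric `d'(ω, ω') = Σ_{j ≥ 1} 2^{-j} d_Y(ω_j, ω'_j)` on `Y^ℕ` (indexing from 0). -/
noncomputable def dseq [PseudoMetricSpace Y] (ω ω' : ℕ → Y) : ℝ :=
  ∑' j : ℕ, dist (ω j) (ω' j) / 2 ^ (j + 1)

/-- The product metric `D = max{d', d}` on `Y^ℕ × X`. -/
noncomputable def Dprod [PseudoMetricSpace X] [PseudoMetricSpace Y]
    (p q : (ℕ → Y) × X) : ℝ :=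
  max (dseq p.1 q.1) (dist p.2 q.2)

/-!
Extend the `j`-th orbit segment of the skew product by `L` symbols, where `diam Y / 2 ^ L < ε`,
i.e. glue for `G` the words `wn j` of the first `n j + L` symbols of `z j`. This gives gaps
`p j ≤ P` and a point `x₀` whose `X`-orbit shadows every segment in its Bowen ball, whatever the
gap words are; taking for `ω₀` the concatenation of all these words, the shifts of `ω₀` along the
`j`-th segment agree with those of `(z j).1` on `L` more coordinates, which makes `d' < ε`.
The skew product then glues with gaps `p j + L`.
-/

theorem List.range_prefix_range {i m : ℕ} (h : i ≤ m) : List.range i <+: List.range m := by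
  simpa [List.take_range, min_eq_left h] using List.take_prefix i (List.range m)

theorem List.IsPrefix.getD_eq {α : Type*} {v w : List α} (h : v <+: w) (d : α) {s : ℕ}
    (hs : s < v.length) : w.getD s d = v[s] := by
  rw [List.getD_eq_getElem _ _ (hs.trans_le h.length_le), h.getElem]

theorem List.IsPrefix.map_range_getD {α : Type*} {v w : List α} (h : v <+: w) (d : α) :
    (List.range v.length).map (w.getD · d) = v :=
  List.ext_getElem (by simp) fun s _ hs => by simpa using h.getD_eq d hs

theorem fw_append (f : Y → X → X) (a b : List Y) (x : X) :
    fw f (a ++ b) x = fw f a (fw f b x) := by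
  induction a with
  | nil => rfl
  | cons y a ih => simp only [List.cons_append, fw, ih]

theorem skew_iterate (f : Y → X → X) (q : (ℕ → Y) × X) (m : ℕ) :
    (skew f)^[m] q = (fun t => q.1 (t + m), fw f ((List.range m).map q.1).reverse q.2) := by
  induction m with
  | zero => rfl
  | succ m ih =>
    rw [Function.iterate_succ_apply', ih]
    refine Prod.ext (funext fun t => ?_) ?_
    · simp only [skew, Nat.add_assoc, Nat.add_comm 1 m]
    · simp [skew, List.range_succ, fw]

theorem dist_le_dB [PseudoMetricSpace X] (f : Y → X → X) {u w : List Y} (h : u <+: w) (x z : X) :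
    dist (fw f u.reverse x) (fw f u.reverse z) ≤ dB f w x z :=
  List.le_max_of_le' 0 (List.mem_map_of_mem ((List.mem_inits _ _).2 h)) le_rfl

theorem Wcum_length (wn wp : ℕ → List Y) (j : ℕ) :
    (Wcum wn wp j).length = ∑ l ∈ Finset.range j, ((wn l).length + (wp l).length) := by
  induction j with
  | zero => rfl
  | succ j ih =>
    simp only [Wcum, List.range_succ, List.map_append, List.flatten_append, List.length_append,
      Finset.sum_range_succ] at ih ⊢
    simp [ih]

theorem Wcum_prefix_of_le (wn wp : ℕ → List Y) {j k : ℕ} (h : j ≤ k) :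
    Wcum wn wp j <+: Wcum wn wp k :=
  ((List.range_prefix_range h).map _).flatten

theorem Wcum_append_prefix (wn wp : ℕ → List Y) {j k : ℕ} (h : j < k) :
    Wcum wn wp j ++ wn j <+: Wcum wn wp k := by
  refine List.IsPrefix.trans ?_ (Wcum_prefix_of_le wn wp h)
  simp [Wcum, List.range_succ]

theorem Wcum_getD_length_add (wn wp : ℕ → List Y) {j k s : ℕ} (h : j < k)
    (hs : s < (wn j).length) (d : Y) :
    (Wcum wn wp k).getD ((Wcum wn wp j).length + s) d = (wn j)[s] := by
  rw [(Wcum_append_prefix wn wp h).getD_eq d (by simpa using hs)]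
  simp [List.getElem_append_right]

theorem hasSum_div_two_pow_succ (a : ℝ) : HasSum (fun j : ℕ => a / 2 ^ (j + 1)) a := by
  simpa [div_div, pow_succ'] using hasSum_geometric_two' a

theorem dseq_le_of_eqOn [PseudoMetricSpace Y] {ω ω' : ℕ → Y} {C : ℝ}
    (hC : ∀ t, dist (ω t) (ω' t) ≤ C) {L : ℕ} (h : ∀ t < L, ω t = ω' t) :
    dseq ω ω' ≤ C / 2 ^ L := by
  have hterm : ∀ j, dist (ω j) (ω' j) / 2 ^ (j + 1) ≤ C / 2 ^ (j + 1) := fun j => by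
    gcongr; exact hC j
  have hsum : Summable fun j => dist (ω j) (ω' j) / 2 ^ (j + 1) :=
    (hasSum_div_two_pow_succ C).summable.of_nonneg_of_le (fun j => by positivity) hterm
  rw [dseq, ← hsum.sum_add_tsum_nat_add L, Finset.sum_eq_zero fun t ht => by
    rw [h t (Finset.mem_range.1 ht), dist_self, zero_div], zero_add]
  calc ∑' j, dist (ω (j + L)) (ω' (j + L)) / 2 ^ (j + L + 1)
      ≤ ∑' j, C / 2 ^ L / 2 ^ (j + 1) := by
        refine ((summable_nat_add_iff L).2 hsum).tsum_le_tsum (fun j => ?_)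
          (hasSum_div_two_pow_succ _).summable
        rw [div_div, ← pow_add, Nat.add_comm L, Nat.add_right_comm j 1 L]
        exact hterm (j + L)
    _ = C / 2 ^ L := (hasSum_div_two_pow_succ _).tsum_eq


theorem Dprod_skew_iterate_lt [PseudoMetricSpace X] [PseudoMetricSpace Y]
    [BoundedSpace Y] (f : Y → X → X) {ω : ℕ → Y} {x : X} {q : (ℕ → Y) × X} {w : List Y}
    {M i L : ℕ} {ε : ℝ} (hL : diam (Set.univ : Set Y) / 2 ^ L < ε)
    (hω : ∀ s < i + L, ω (M + s) = q.1 s) (hw : (List.range i).map q.1 <+: w)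
    (hx : dB f w q.2 (fw f ((List.range M).map ω).reverse x) < ε) :
    Dprod ((skew f)^[M + i] (ω, x)) ((skew f)^[i] q) < ε := by
  simp only [skew_iterate, Dprod]
  refine max_lt ((dseq_le_of_eqOn (fun t => dist_le_diam_of_mem (Bornology.isBounded_univ.2 ‹_›)
    (Set.mem_univ _) (Set.mem_univ _)) fun t ht => ?_).trans_lt hL) ?_
  · rw [show t + (M + i) = M + (t + i) by omega]
    exact hω (t + i) (by omega)
  · have hword : (List.range (M + i)).map ω = (List.range M).map ω ++ (List.range i).map q.1 := by
      rw [List.range_add, List.map_append, List.map_map]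
      exact congrArg _ (List.map_inj_left.2 fun s hs => hω s (by simp at hs; omega))
    rw [hword, List.reverse_append, fw_append, dist_comm]
    exact (dist_le_dB f hw _ _).trans_lt hx

theorem gluing_orbit_skew_product_general [MetricSpace X] [MetricSpace Y]
    [CompactSpace Y] (f : Y → X → X)
    (hglue : ∀ ε : ℝ, 0 < ε → ∃ P : ℕ, 0 < P ∧
      ∀ (k : ℕ) (x : ℕ → X) (wn : ℕ → List Y), 1 ≤ k → (∀ j < k, 0 < (wn j).length) →
        ∃ p : ℕ → ℕ, (∀ j < k, p j ≤ P) ∧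
          ∀ wp : ℕ → List Y, (∀ j < k, (wp j).length = p j) →
            (⋂ j ∈ Finset.range k,
              fw f (Wcum wn wp j).reverse ⁻¹' BB f (wn j) (x j) ε).Nonempty) :
    ∀ ε : ℝ, 0 < ε → ∃ P : ℕ, 1 ≤ P ∧
      ∀ (k : ℕ) (z : ℕ → (ℕ → Y) × X) (n : ℕ → ℕ), 1 ≤ k → (∀ j < k, 0 < n j) →
        ∃ p : ℕ → ℕ, (∀ j < k, p j ≤ P) ∧ ∃ z₀ : (ℕ → Y) × X,
          ∀ j < k, ∀ i < n j,
            Dprod ((skew f)^[(∑ l ∈ Finset.range j, (n l + p l)) + i] z₀)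
              ((skew f)^[i] (z j)) < ε := by
  intro ε hε
  obtain ⟨L, hL⟩ : ∃ L : ℕ, diam (Set.univ : Set Y) / 2 ^ L < ε := by
    obtain ⟨L, hL⟩ := pow_unbounded_of_one_lt (diam (Set.univ : Set Y) / ε) one_lt_two
    exact ⟨L, (div_lt_comm₀ (by positivity) hε).2 hL⟩
  obtain ⟨P, hP0, hP⟩ := hglue ε hε
  refine ⟨P + L, by omega, fun k z n hk hn => ?_⟩
  set wn : ℕ → List Y := fun j => (List.range (n j + L)).map (z j).1
  obtain ⟨p, hpP, hx⟩ := hP k (fun j => (z j).2) wn hk fun j hj => by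
    simpa [wn] using Nat.add_pos_left (hn j hj) L
  refine ⟨fun j => p j + L, fun j hj => Nat.add_le_add_right (hpP j hj) L, ?_⟩
  set wp : ℕ → List Y := fun j => List.replicate (p j) ((z 0).1 0)
  obtain ⟨x₀, hx₀⟩ := hx wp fun j _ => List.length_replicate
  refine ⟨(fun m => (Wcum wn wp k).getD m ((z 0).1 0), x₀), fun j hj i hi => ?_⟩
  have hM : ∑ l ∈ Finset.range j, (n l + (p l + L)) = (Wcum wn wp j).length := by
    rw [Wcum_length]
    exact Finset.sum_congr rfl fun l _ => by simp only [wn, wp, List.length_map,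
      List.length_range, List.length_replicate]; omega
  rw [hM]
  refine Dprod_skew_iterate_lt f hL (fun s hs => ?_)
    ((List.range_prefix_range (m := n j + L) (by omega)).map _) ?_
  · have hs' : s < (wn j).length := by
      simp only [wn, List.length_map, List.length_range]; omega
    rw [Wcum_getD_length_add wn wp hj hs']
    simp [wn]
  · rw [(Wcum_prefix_of_le wn wp hj.le).map_range_getD]
    exact Set.mem_iInter₂.1 hx₀ j (Finset.mem_range.2 hj)

/-- If the free semigroup action `G` has the gluing orbit property, then the skew product
`F(ω,x) = (σω, f_{ω₁} x)` has the gluing orbit property as a single map for the metric `D`. -/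
theorem gluing_orbit_skew_product [MetricSpace X] [CompactSpace X] [MetricSpace Y]
    [CompactSpace Y] (f : Y → X → X) (hf : ∀ y, Continuous (f y))
    (hglue : ∀ ε : ℝ, 0 < ε → ∃ P : ℕ, 0 < P ∧
      ∀ (k : ℕ) (x : ℕ → X) (wn : ℕ → List Y), 1 ≤ k → (∀ j < k, 0 < (wn j).length) →
        ∃ p : ℕ → ℕ, (∀ j < k, p j ≤ P) ∧
          ∀ wp : ℕ → List Y, (∀ j < k, (wp j).length = p j) →
            (⋂ j ∈ Finset.range k,
              fw f (Wcum wn wp j).reverse ⁻¹' BB f (wn j) (x j) ε).Nonempty) :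
    ∀ ε : ℝ, 0 < ε → ∃ P : ℕ, 1 ≤ P ∧
      ∀ (k : ℕ) (z : ℕ → (ℕ → Y) × X) (n : ℕ → ℕ), 1 ≤ k → (∀ j < k, 0 < n j) →
        ∃ p : ℕ → ℕ, (∀ j < k, p j ≤ P) ∧ ∃ z₀ : (ℕ → Y) × X,
          ∀ j < k, ∀ i < n j,
            Dprod ((skew f)^[(∑ l ∈ Finset.range j, (n l + p l)) + i] z₀)
              ((skew f)^[i] (z j)) < ε :=
  gluing_orbit_skew_product_general f hglue
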